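/- Let B, R > 0, ℓ > 2R, Θ₀ > 0, and let C₀, h₀ > 0. Suppose m, m' : (0, h₀) → ℝ satisfy |h·m(h) − BR²/2 − √(h·Θ₀·B·R²)| ≤ C₀·h and |h·m'(h) − BR²/2 − √(h·Θ₀·B·R²)| ≤ C₀·h for all h ∈ (0,h₀). Set x₂* = −i·√(ℓ²/4 − R²), and for each h let s_h be the phase with parameters m(h), m'(h). Then there exist C > 0 and ε > 0 such that for all real x₂ with |x₂| ≤ ε and all h ∈ (0, ε): | s_h(0, x₂ + x₂*) − s_h(0, x₂*) − (B·√(ℓ²−4R²)/(4R²))·(ℓ − √(ℓ²−4R²))·x₂² + i·(x₂/R)·(ℓ − √(ℓ²−4R²))·√(h·Θ₀·B) | ≤ C·(|x₂|³ + √h·x₂² + h·|x₂|). -/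

import Mathlib

/-!
On the line `x₁ = 0` both logarithms in `s_h` have the argument `(c + i x₂)/R`, where
`c = ℓ/2 + a`, `a = √(ℓ²/4 - R²)`, so `s_h(0, x₂ + x₂*) - s_h(0, x₂*)` equals
`(B/2) x₂² + i B (ℓ/2 - a) x₂ - h(m + m') log(1 + i x₂/c)`. Since `c (ℓ/2 - a) = R²`, expanding
the logarithm to second order and inserting `h(m + m') = B R² + 2R√(hΘ₀B) + O(h)` cancels the
stated quadratic and linear terms exactly; what is left is `-R√(hΘ₀B) x₂²/c²`, an `O(h |x₂|)` term
and `h(m + m')` times the cubic Taylor remainder of the logarithm.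
-/

open Complex

lemma Real.sqrt_sq_sub_four_mul_sq (ℓ R : ℝ) :
    √(ℓ ^ 2 - 4 * R ^ 2) = 2 * √(ℓ ^ 2 / 4 - R ^ 2) := by
  rw [show ℓ ^ 2 - 4 * R ^ 2 = 2 ^ 2 * (ℓ ^ 2 / 4 - R ^ 2) by ring,
    Real.sqrt_mul (by positivity), Real.sqrt_sq zero_le_two]

lemma Complex.norm_log_one_add_sub_le {z : ℂ} (hz : ‖z‖ ≤ 1 / 2) :
    ‖log (1 + z) - (z - z ^ 2 / 2)‖ ≤ 2 / 3 * ‖z‖ ^ 3 := by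
  have h := norm_log_sub_logTaylor_le 2 (hz.trans_lt one_half_lt_one)
  have hinv : (1 - ‖z‖)⁻¹ ≤ 2 := by
    rw [inv_le_comm₀ (by linarith) two_pos]; linarith
  have hTaylor : logTaylor (2 + 1) z = z - z ^ 2 / 2 := by
    simp [logTaylor_succ, logTaylor_zero]; ring
  rw [hTaylor] at h
  calc _ ≤ ‖z‖ ^ (2 + 1) * (1 - ‖z‖)⁻¹ / (2 + 1) := h
    _ ≤ ‖z‖ ^ 3 * 2 / 3 := by norm_num; gcongr
    _ = 2 / 3 * ‖z‖ ^ 3 := by ring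

lemma Complex.norm_sub_sq_div_two_le {z : ℂ} (hz : ‖z‖ ≤ 1 / 2) :
    ‖z - z ^ 2 / 2‖ ≤ 5 / 4 * ‖z‖ := by
  calc ‖z - z ^ 2 / 2‖ ≤ ‖z‖ + ‖z‖ * ‖z‖ / 2 := by
        refine (norm_sub_le _ _).trans ?_; simp [sq]
    _ ≤ ‖z‖ + ‖z‖ * (1 / 2) / 2 := by gcongr
    _ = 5 / 4 * ‖z‖ := by ring

lemma abs_mul_add_sub_le {B R h m m' s e : ℝ} (hm : |h * m - B * R ^ 2 / 2 - s| ≤ e)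
    (hm' : |h * m' - B * R ^ 2 / 2 - s| ≤ e) :
    |h * (m + m') - B * R ^ 2 - 2 * s| ≤ 2 * e :=
  calc _ = |(h * m - B * R ^ 2 / 2 - s) + (h * m' - B * R ^ 2 / 2 - s)| := by ring_nf
    _ ≤ _ := abs_add_le _ _
    _ ≤ 2 * e := by linarith

/-- The `h`-dependent phase function `s_h` of the paper, with parameters `B`, `R`, `ℓ`, `h`
and angular momenta `m`, `m'`, using the principal branch `Complex.log`. -/
noncomputable def sh (B R ℓ h m m' : ℝ) (x₁ x₂ : ℂ) : ℂ :=
  ((B : ℂ) / 4) * (x₁ + (ℓ : ℂ) / 2) ^ 2 + ((B : ℂ) / 4) * (x₁ - (ℓ : ℂ) / 2) ^ 2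
    + ((B : ℂ) / 2) * x₂ ^ 2 - (B : ℂ) * (R : ℂ) ^ 2 / 2
    + Complex.I * ((B : ℂ) * (ℓ : ℂ) / 2) * x₂
    - (h : ℂ) * (m : ℂ) * Complex.log (((ℓ : ℂ) / 2 + x₁ + Complex.I * x₂) / (R : ℂ))
    - (h : ℂ) * (m' : ℂ) * Complex.log (((ℓ : ℂ) / 2 - x₁ + Complex.I * x₂) / (R : ℂ))

lemma sh_zero_sub_sh_zero (B R ℓ h m m' a x : ℝ) (hR : 0 < R) (hc : 0 < ℓ / 2 + a) :
    sh B R ℓ h m m' 0 (x + -(I * a)) - sh B R ℓ h m m' 0 (-(I * a))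
      = (B / 2 : ℂ) * x ^ 2 + I * B * ((ℓ : ℂ) / 2 - a) * x
        - ((h * (m + m') : ℝ) : ℂ) * log (1 + I * x / ((ℓ / 2 + a : ℝ) : ℂ)) := by
  set c : ℝ := ℓ / 2 + a
  have hcC : (c : ℂ) ≠ 0 := ofReal_ne_zero.mpr hc.ne'
  have hlog : ∀ y : ℝ, log (((ℓ : ℂ) / 2 + I * (y + -(I * a))) / R)
      = Real.log (c / R) + log (1 + I * y / c) := by
    intro y
    have hy : (1 + I * y / c : ℂ) ≠ 0 := by
      intro h0; simpa [div_re] using congrArg re h0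
    rw [← log_ofReal_mul (div_pos hc hR) hy]
    have harg : (ℓ : ℂ) / 2 + I * (y + -(I * a)) = c + I * y := by
      push_cast [c]; linear_combination (-(a : ℂ)) * I_sq
    rw [harg]
    congr 1
    field_simp
    push_cast
    ring
  have hlog0 := hlog 0
  simp only [ofReal_zero, zero_add, mul_zero, zero_div, add_zero, log_one] at hlog0
  unfold sh
  simp only [add_zero, sub_zero, hlog, hlog0, push_cast]
  ring

lemma phase_sub_principal_part_eq (B R ℓ a x S M : ℝ) (L : ℂ) (hR : R ≠ 0) (hc : ℓ / 2 + a ≠ 0)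
    (hcR : (ℓ / 2 + a) * (ℓ / 2 - a) = R ^ 2) :
    (B / 2 : ℂ) * x ^ 2 + I * B * ((ℓ : ℂ) / 2 - a) * x - (M : ℂ) * L
        - ((B * (2 * a) / (4 * R ^ 2) * (ℓ - 2 * a) * x ^ 2 : ℝ) : ℂ)
        + I * ((x / R * (ℓ - 2 * a) * S : ℝ) : ℂ)
      = -((M - B * R ^ 2 - 2 * R * S : ℝ) : ℂ)
            * (I * x / ((ℓ / 2 + a : ℝ) : ℂ) - (I * x / ((ℓ / 2 + a : ℝ) : ℂ)) ^ 2 / 2)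
        - ((R * S * x ^ 2 / (ℓ / 2 + a) ^ 2 : ℝ) : ℂ)
        - (M : ℂ) * (L - (I * x / ((ℓ / 2 + a : ℝ) : ℂ)
            - (I * x / ((ℓ / 2 + a : ℝ) : ℂ)) ^ 2 / 2)) := by
  -- `c = ℓ/2 + a` solves `c² - ℓ c + R² = 0`, so `a` and `ℓ` are rational in `c` and `R`.
  obtain ⟨c, rfl⟩ : ∃ c, a = c - ℓ / 2 := ⟨ℓ / 2 + a, by ring⟩
  rw [add_sub_cancel] at hc hcR ⊢
  obtain rfl : ℓ = c + R ^ 2 / c := by field_simp; linear_combination hcR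
  have hcC : (c : ℂ) ≠ 0 := ofReal_ne_zero.mpr hc
  have hRC : (R : ℂ) ≠ 0 := ofReal_ne_zero.mpr hR
  rw [div_pow, mul_pow, I_sq]
  push_cast
  field_simp
  ring

lemma norm_remainder_le {c x δ S M R : ℝ} (hc : 0 < c) (hx : |x| ≤ c / 2) (hRS : 0 ≤ R * S) :
    ‖-(δ : ℂ) * (I * x / c - (I * x / c) ^ 2 / 2) - ((R * S * x ^ 2 / c ^ 2 : ℝ) : ℂ)
        - (M : ℂ) * (log (1 + I * x / c) - (I * x / c - (I * x / c) ^ 2 / 2))‖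
      ≤ |δ| * (5 / 4 * (|x| / c)) + R * S * x ^ 2 / c ^ 2 + |M| * (2 / 3 * (|x| / c) ^ 3) := by
  have hz : ‖I * x / c‖ = |x| / c := by simp [abs_of_pos hc]
  have hz2 : ‖I * x / c‖ ≤ 1 / 2 := by rw [hz, div_le_iff₀ hc]; linarith
  have hRSx : 0 ≤ R * S * x ^ 2 / c ^ 2 := div_nonneg (mul_nonneg hRS (sq_nonneg x)) (sq_nonneg c)
  calc _ ≤ ‖-(δ : ℂ) * (I * x / c - (I * x / c) ^ 2 / 2)‖ + ‖((R * S * x ^ 2 / c ^ 2 : ℝ) : ℂ)‖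
        + ‖(M : ℂ) * (log (1 + I * x / c) - (I * x / c - (I * x / c) ^ 2 / 2))‖ :=
        norm_sub_le_of_le (norm_sub_le _ _) le_rfl
    _ ≤ _ := by
      rw [norm_mul, norm_mul, norm_neg, norm_real, norm_real, norm_real, Real.norm_eq_abs,
        Real.norm_eq_abs, Real.norm_eq_abs, abs_of_nonneg hRSx, ← hz]
      gcongr
      · exact norm_sub_sq_div_two_le hz2
      · exact norm_log_one_add_sub_le hz2

lemma remainder_bound_le_mul {c x h δ M S R σ K Mb : ℝ} (hc : 0 < c) (hh : 0 < h) (hR : 0 ≤ R)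
    (hσ : 0 ≤ σ) (hδ : |δ| ≤ K * h) (hM : |M| ≤ Mb) (hS : S = σ * √h) :
    |δ| * (5 / 4 * (|x| / c)) + R * S * x ^ 2 / c ^ 2 + |M| * (2 / 3 * (|x| / c) ^ 3)
      ≤ (5 * K / (4 * c) + R * σ / c ^ 2 + 2 * Mb / (3 * c ^ 3))
          * (|x| ^ 3 + √h * x ^ 2 + h * |x|) := by
  have hK : 0 ≤ K := nonneg_of_mul_nonneg_left ((abs_nonneg δ).trans hδ) hh
  have hMb : 0 ≤ Mb := (abs_nonneg M).trans hM
  have hδx : |δ| * (5 / 4 * (|x| / c)) ≤ 5 * K / (4 * c) * (h * |x|) :=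
    calc _ ≤ K * h * (5 / 4 * (|x| / c)) := by gcongr
      _ = _ := by ring
  have hSx : R * S * x ^ 2 / c ^ 2 = R * σ / c ^ 2 * (√h * x ^ 2) := by rw [hS]; ring
  have hMx : |M| * (2 / 3 * (|x| / c) ^ 3) ≤ 2 * Mb / (3 * c ^ 3) * |x| ^ 3 :=
    calc _ ≤ Mb * (2 / 3 * (|x| / c) ^ 3) := by gcongr
      _ = _ := by ring
  have k₁ : 0 ≤ 5 * K / (4 * c) := by positivity
  have k₂ : 0 ≤ R * σ / c ^ 2 := by positivity
  have k₃ : 0 ≤ 2 * Mb / (3 * c ^ 3) := by positivity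
  have t₁ : 0 ≤ |x| ^ 3 := by positivity
  have t₂ : 0 ≤ √h * x ^ 2 := by positivity
  have t₃ : 0 ≤ h * |x| := by positivity
  nlinarith [mul_nonneg k₁ t₁, mul_nonneg k₁ t₂, mul_nonneg k₂ t₁, mul_nonneg k₂ t₃,
    mul_nonneg k₃ t₂, mul_nonneg k₃ t₃]

theorem sh_expansion_general (B R ℓ Θ₀ C₀ h₀ : ℝ) (hB : 0 < B) (hR : 0 < R) (hℓ : 2 * R < ℓ)
    (hC₀ : 0 < C₀) (hh₀ : 0 < h₀) (m m' : ℝ → ℝ)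
    (hm : ∀ h ∈ Set.Ioo (0 : ℝ) h₀,
      |h * m h - B * R ^ 2 / 2 - Real.sqrt (h * Θ₀ * B * R ^ 2)| ≤ C₀ * h)
    (hm' : ∀ h ∈ Set.Ioo (0 : ℝ) h₀,
      |h * m' h - B * R ^ 2 / 2 - Real.sqrt (h * Θ₀ * B * R ^ 2)| ≤ C₀ * h) :
    ∃ C > 0, ∃ ε > 0, ∀ x₂ : ℝ, |x₂| ≤ ε → ∀ h ∈ Set.Ioo (0 : ℝ) ε,
      ‖(sh B R ℓ h (m h) (m' h) 0
            ((x₂ : ℂ) + -(Complex.I * (Real.sqrt (ℓ ^ 2 / 4 - R ^ 2) : ℂ)))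
          - sh B R ℓ h (m h) (m' h) 0 (-(Complex.I * (Real.sqrt (ℓ ^ 2 / 4 - R ^ 2) : ℂ)))
          - ((B * Real.sqrt (ℓ ^ 2 - 4 * R ^ 2) / (4 * R ^ 2)
                * (ℓ - Real.sqrt (ℓ ^ 2 - 4 * R ^ 2)) * x₂ ^ 2 : ℝ) : ℂ)
          + Complex.I * ((x₂ / R * (ℓ - Real.sqrt (ℓ ^ 2 - 4 * R ^ 2))
                * Real.sqrt (h * Θ₀ * B) : ℝ) : ℂ))‖
        ≤ C * (|x₂| ^ 3 + Real.sqrt h * x₂ ^ 2 + h * |x₂|) := by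
  set a := √(ℓ ^ 2 / 4 - R ^ 2)
  set c := ℓ / 2 + a
  have hc : 0 < c := add_pos_of_pos_of_nonneg (by linarith) (Real.sqrt_nonneg _)
  have hcR : c * (ℓ / 2 - a) = R ^ 2 := by
    linear_combination -Real.sq_sqrt (show 0 ≤ ℓ ^ 2 / 4 - R ^ 2 by nlinarith)
  set σ := √(Θ₀ * B)
  set Mb := B * R ^ 2 + 2 * R * σ * √h₀ + 2 * C₀ * h₀
  refine ⟨5 * (2 * C₀) / (4 * c) + R * σ / c ^ 2 + 2 * Mb / (3 * c ^ 3), by positivity,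
    min (c / 2) h₀, by positivity, fun x hx h ⟨hh, hhε⟩ ↦ ?_⟩
  have hh_lt : h < h₀ := hhε.trans_le (min_le_right _ _)
  have hS : √(h * Θ₀ * B) = σ * √h := by rw [mul_assoc, Real.sqrt_mul hh.le, mul_comm]
  have hδ : |h * (m h + m' h) - B * R ^ 2 - 2 * R * √(h * Θ₀ * B)| ≤ 2 * C₀ * h := by
    have hsR : √(h * Θ₀ * B * R ^ 2) = R * √(h * Θ₀ * B) := by
      rw [Real.sqrt_mul' _ (sq_nonneg R), Real.sqrt_sq hR.le, mul_comm]
    have hsum := abs_mul_add_sub_le (hm h ⟨hh, hh_lt⟩) (hm' h ⟨hh, hh_lt⟩)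
    rw [hsR] at hsum
    simpa only [mul_assoc] using hsum
  have hM : |h * (m h + m' h)| ≤ Mb := by
    have hS_le : 2 * R * √(h * Θ₀ * B) ≤ 2 * R * σ * √h₀ := by rw [hS, ← mul_assoc]; gcongr
    have hh_le : 2 * C₀ * h ≤ 2 * C₀ * h₀ := by gcongr
    have : 0 ≤ B * R ^ 2 + 2 * R * √(h * Θ₀ * B) := by positivity
    rw [abs_le]
    constructor <;> linarith [abs_le.1 hδ]
  rw [Real.sqrt_sq_sub_four_mul_sq, sh_zero_sub_sh_zero _ _ _ _ _ _ _ _ hR hc,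
    phase_sub_principal_part_eq _ _ _ _ _ (√(h * Θ₀ * B)) _ _ hR.ne' hc.ne' hcR]
  exact (norm_remainder_le hc (hx.trans (min_le_left _ _)) (by positivity)).trans
    (remainder_bound_le_mul hc hh hR.le (Real.sqrt_nonneg _) hδ hM hS)

/-- Taylor-type expansion of `x₂ ↦ s_h(0, x₂ + x₂*)` for real `x₂` near `0`:
there are `C, ε > 0` such that for `|x₂| ≤ ε` and `h ∈ (0, ε)`,
`|s_h(0, x₂+x₂*) − s_h(0, x₂*) − A·x₂² + i·(x₂/R)(ℓ−√(ℓ²−4R²))√(hΘ₀B)|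
  ≤ C(|x₂|³ + √h·x₂² + h·|x₂|)`, where
`A = (B√(ℓ²−4R²)/(4R²))(ℓ − √(ℓ²−4R²))`, assuming
`h·m(h) = BR²/2 + √(hΘ₀BR²) + O(h)` and similarly for `m'`. -/
theorem sh_expansion (B R ℓ Θ₀ C₀ h₀ : ℝ) (hB : 0 < B) (hR : 0 < R) (hℓ : 2 * R < ℓ)
    (hΘ : 0 < Θ₀) (hC₀ : 0 < C₀) (hh₀ : 0 < h₀) (m m' : ℝ → ℝ)
    (hm : ∀ h ∈ Set.Ioo (0 : ℝ) h₀,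
      |h * m h - B * R ^ 2 / 2 - Real.sqrt (h * Θ₀ * B * R ^ 2)| ≤ C₀ * h)
    (hm' : ∀ h ∈ Set.Ioo (0 : ℝ) h₀,
      |h * m' h - B * R ^ 2 / 2 - Real.sqrt (h * Θ₀ * B * R ^ 2)| ≤ C₀ * h) :
    ∃ C > 0, ∃ ε > 0, ∀ x₂ : ℝ, |x₂| ≤ ε → ∀ h ∈ Set.Ioo (0 : ℝ) ε,
      ‖(sh B R ℓ h (m h) (m' h) 0
            ((x₂ : ℂ) + -(Complex.I * (Real.sqrt (ℓ ^ 2 / 4 - R ^ 2) : ℂ)))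
          - sh B R ℓ h (m h) (m' h) 0 (-(Complex.I * (Real.sqrt (ℓ ^ 2 / 4 - R ^ 2) : ℂ)))
          - ((B * Real.sqrt (ℓ ^ 2 - 4 * R ^ 2) / (4 * R ^ 2)
                * (ℓ - Real.sqrt (ℓ ^ 2 - 4 * R ^ 2)) * x₂ ^ 2 : ℝ) : ℂ)
          + Complex.I * ((x₂ / R * (ℓ - Real.sqrt (ℓ ^ 2 - 4 * R ^ 2))
                * Real.sqrt (h * Θ₀ * B) : ℝ) : ℂ))‖
        ≤ C * (|x₂| ^ 3 + Real.sqrt h * x₂ ^ 2 + h * |x₂|) :=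
  sh_expansion_general B R ℓ Θ₀ C₀ h₀ hB hR hℓ hC₀ hh₀ m m' hm hm'
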